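/- If a vector field v belongs to the Raviart–Thomas space RT_k = (P_k)^d ⊕ x·P_k^hom (d = 2 or 3) and div v = 0, then v belongs to (P_k)^d. -/

import Mathlib

open MvPolynomial

/-- `X i * ∂ᵢ(monomial s a) = monomial s (a * s i)`. -/
lemma X_mul_pderiv_monomial {d : ℕ} (i : Fin d) (s : Fin d →₀ ℕ) (a : ℝ) :
    X i * pderiv i (monomial s a) = monomial s (a * s i) := by
  rw [pderiv_monomial]
  by_cases h : s i = 0
  · simp [h]
  · have hidx : Finsupp.single i 1 + (s - Finsupp.single i 1) = s := by
      ext j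
      rcases eq_or_ne j i with rfl | hj
      · simp only [Finsupp.add_apply, Finsupp.single_eq_same, Finsupp.tsub_apply]
        omega
      · simp [Finsupp.single_eq_of_ne' (Ne.symm hj)]
    rw [X, monomial_mul, one_mul, hidx]

/-- Euler's identity for homogeneous polynomials. -/
lemma euler_identity {d k : ℕ} {p : MvPolynomial (Fin d) ℝ} (hp : p.IsHomogeneous k) :
    ∑ i, X i * pderiv i p = (k : ℝ) • p := by
  conv_lhs => rw [p.as_sum]
  simp_rw [map_sum, Finset.mul_sum]
  rw [Finset.sum_comm]
  conv_rhs => rw [p.as_sum, Finset.smul_sum]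
  refine Finset.sum_congr rfl fun s hs => ?_
  have hdeg : s.degree = k := by
    rw [Finsupp.degree_eq_weight_one]
    exact hp (mem_support_iff.mp hs)
  calc ∑ i, X i * pderiv i (monomial s (coeff s p))
      = ∑ i, monomial s (coeff s p * s i) :=
        Finset.sum_congr rfl fun i _ => X_mul_pderiv_monomial i s _
    _ = monomial s (coeff s p * ∑ i, (s i : ℝ)) := by
        rw [Finset.mul_sum, map_sum]
    _ = (k : ℝ) • monomial s (coeff s p) := by
        have hsum : ∑ i, (s i : ℝ) = (k : ℝ) := by
          rw [← Nat.cast_sum]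
          norm_cast
          rw [← hdeg, Finsupp.degree]
          exact (Finset.sum_subset (Finset.subset_univ _)
            (fun x _ hx => Finsupp.notMem_support_iff.mp hx)).symm
        rw [hsum, smul_monomial, smul_eq_mul, mul_comm]

/-- The partial derivative decreases total degree by at least one. -/
lemma totalDegree_pderiv_le' {d : ℕ} (i : Fin d) (q : MvPolynomial (Fin d) ℝ) :
    (pderiv i q).totalDegree ≤ q.totalDegree - 1 := by
  conv_lhs => rw [q.as_sum]
  rw [map_sum]
  refine totalDegree_finsetSum_le fun s hs => ?_
  rw [pderiv_monomial]
  by_cases h : s i = 0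
  · rw [h]
    simp
  · refine (totalDegree_monomial_le _ _).trans ?_
    set t : Fin d →₀ ℕ := s - Finsupp.single i 1 with ht
    have hle : ∀ j, t j ≤ s j := fun j => by
      rw [ht, Finsupp.tsub_apply]
      exact Nat.sub_le _ _
    have hti : t i = s i - 1 := by rw [ht, Finsupp.tsub_apply, Finsupp.single_eq_same]
    have hsum : t.sum (fun _ => id) = ∑ j ∈ s.support, t j := by
      rw [Finsupp.sum]
      refine Finset.sum_subset (fun j hj => ?_) (fun j _ hj => ?_)
      · refine Finsupp.mem_support_iff.mpr fun hz => Finsupp.mem_support_iff.mp hj ?_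
        have := hle j
        omega
      · exact Finsupp.notMem_support_iff.mp hj
    have hi : i ∈ s.support := Finsupp.mem_support_iff.mpr h
    have hmain : (∑ j ∈ s.support, t j) ≤ (∑ j ∈ s.support, s j) - 1 := by
      calc ∑ j ∈ s.support, t j
          = (∑ j ∈ s.support.erase i, t j) + (s i - 1) := by
            rw [← Finset.sum_erase_add s.support _ hi, hti]
        _ ≤ (∑ j ∈ s.support.erase i, s j) + (s i - 1) := by
            gcongr with j hj; exact hle j
        _ ≤ (∑ j ∈ s.support, s j) - 1 := by
            rw [← Finset.sum_erase_add s.support _ hi]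
            omega
    calc t.sum (fun _ => id) ≤ (∑ j ∈ s.support, s j) - 1 := hsum ▸ hmain
      _ ≤ q.totalDegree - 1 := by
          have := le_totalDegree hs
          rw [Finsupp.sum] at this
          omega

theorem pzero_of_div {d k : ℕ} (w : Fin d → MvPolynomial (Fin d) ℝ)
    (p : MvPolynomial (Fin d) ℝ) (hw : ∀ i, (w i).totalDegree ≤ k)
    (hp : p.IsHomogeneous k) (hd : 0 < d)
    (hdiv : (∑ i, pderiv i (w i + X i * p)) = 0) : p = 0 := by
  have key : ((d : ℝ) + k) • p = -∑ i, pderiv i (w i) := by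
    have expand : ∑ i, pderiv i (w i + X i * p)
        = ∑ i, pderiv i (w i) + ((d : ℝ) + (k : ℝ)) • p := by
      have step : ∀ i : Fin d, (pderiv i) (w i + X i * p)
          = pderiv i (w i) + (p + X i * pderiv i p) := by
        intro i
        simp [pderiv_mul, mul_comm]
      rw [Finset.sum_congr rfl fun i _ => step i, Finset.sum_add_distrib,
        Finset.sum_add_distrib, Finset.sum_const, Finset.card_univ, Fintype.card_fin,
        euler_identity hp, add_smul, ← Nat.cast_smul_eq_nsmul ℝ d p]
    rw [expand] at hdiv
    linear_combination (norm := module) hdiv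
  have hne : ((d : ℝ) + k) ≠ 0 := by positivity
  have hps : p = ((d : ℝ) + k)⁻¹ • (((d : ℝ) + k) • p) := by
    rw [smul_smul, inv_mul_cancel₀ hne, one_smul]
  by_contra hpne
  have htdp : p.totalDegree = k := hp.totalDegree hpne
  have hdegS : (∑ i, pderiv i (w i)).totalDegree ≤ k - 1 :=
    totalDegree_finsetSum_le fun i _ =>
      (totalDegree_pderiv_le' i (w i)).trans (Nat.sub_le_sub_right (hw i) 1)
  have hle : p.totalDegree ≤ k - 1 := by
    calc p.totalDegree ≤ (((d : ℝ) + k) • p).totalDegree := by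
          conv_lhs => rw [hps]
          exact totalDegree_smul_le _ _
      _ = (-∑ i, pderiv i (w i)).totalDegree := by rw [key]
      _ ≤ k - 1 := by rw [totalDegree_neg]; exact hdegS
  rw [htdp] at hle
  have hk0 : k = 0 := by omega
  subst hk0
  have hSw : ∑ i, pderiv i (w i) = 0 := by
    refine Finset.sum_eq_zero fun i _ => ?_
    conv_lhs => rw [(w i).as_sum, map_sum]
    refine Finset.sum_eq_zero fun m hm => ?_
    have h0 := (totalDegree_eq_zero_iff (Fin d) (w i)).mp (Nat.le_zero.mp (hw i)) m hm i
    rw [pderiv_monomial, h0]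
    simp
  rw [hSw, neg_zero] at key
  exact hpne (by rw [hps, key, smul_zero])

/-- if `v ∈ RT_k = (P_k)^d ⊕ x P_k^hom` (`d = 2` or `3`) and `div v = 0`,
then `v ∈ (P_k)^d`. -/
theorem RT_divfree_mem_Pk (d : ℕ) (hd : d = 2 ∨ d = 3) (k : ℕ)
    (v : Fin d → MvPolynomial (Fin d) ℝ)
    (hRT : ∃ (w : Fin d → MvPolynomial (Fin d) ℝ) (p : MvPolynomial (Fin d) ℝ),
      (∀ i, (w i).totalDegree ≤ k) ∧ p.IsHomogeneous k ∧
      v = w + fun i => X i * p)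
    (hdiv : (∑ i, pderiv i (v i)) = 0) :
    ∀ i, (v i).totalDegree ≤ k := by
  obtain ⟨w, p, hw, hp, hv⟩ := hRT
  have hd0 : 0 < d := by rcases hd with rfl | rfl <;> norm_num
  subst hv
  simp only [Pi.add_apply] at hdiv ⊢
  have hp0 : p = 0 := pzero_of_div w p hw hp hd0 hdiv
  intro i
  rw [hp0, mul_zero, add_zero]
  exact hw i
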